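/- arXiv:0904.3129 — 4 statements merged into one kernel-verified Lean document; each statement's English description precedes it below -/
import Mathlib

section
/- Let K be the Klein bottle group with elements y, t satisfying y t y⁻¹ = t⁻¹. An element x ∈ K satisfies x² = y² if and only if x = y t^n for some integer n. -/
namespace KleinBottle

/-- The homomorphism `Multiplicative ℤ →* MulAut (Multiplicative ℤ)` sending the generator
`Multiplicative.ofAdd 1` to the inversion automorphism `x ↦ x⁻¹`. -/
def φ : Multiplicative ℤ →* MulAut (Multiplicative ℤ) :=
  zpowersHom (MulAut (Multiplicative ℤ)) (MulEquiv.inv (Multiplicative ℤ))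

/-- The Klein bottle group `K = ℤ ⋊ ℤ`. -/
abbrev K : Type := Multiplicative ℤ ⋊[φ] Multiplicative ℤ

/-- The element `t` (the Dehn twist `t_a` in the paper). -/
def t : K := SemidirectProduct.inl (Multiplicative.ofAdd 1)

/-- The element `y` (a Y-homeomorphism in the paper). -/
def y : K := SemidirectProduct.inr (Multiplicative.ofAdd 1)

lemma φ_one : φ (Multiplicative.ofAdd 1) = MulEquiv.inv (Multiplicative ℤ) := by
  simp [φ]

lemma t_pow (n : ℤ) : t ^ n = SemidirectProduct.inl (Multiplicative.ofAdd n) := by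
  rw [t, ← MonoidHom.map_zpow]
  congr 1
  rw [← ofAdd_zsmul]
  norm_num

theorem sq_eq_y_sq_iff (x : K) :
    x ^ 2 = y ^ 2 ↔ ∃ n : ℤ, x = y * t ^ n := by
  constructor
  · intro h
    have hr : x.right ^ 2 = Multiplicative.ofAdd (1:ℤ) ^ 2 := by
      have := congrArg SemidirectProduct.right h
      simpa [y, sq] using this
    have hr1 : x.right = Multiplicative.ofAdd (1:ℤ) := by
      have h2 := congrArg Multiplicative.toAdd hr
      simp [toAdd_pow] at h2
      have h3 : Multiplicative.toAdd x.right = 1 := by omega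
      rw [← h3]; rfl
    refine ⟨-Multiplicative.toAdd x.left, ?_⟩
    rw [t_pow]
    ext
    · simp [y, φ_one]
    · simp [y, hr1]
  · rintro ⟨n, rfl⟩
    rw [t_pow]
    ext
    · simp [y, sq, φ_one]
    · simp [y, sq]

end KleinBottle
end

section
/- Let K be the Klein bottle group with elements y, t satisfying y t y⁻¹ = t⁻¹. Then for every integer n one has t⁻ⁿ y tⁿ = y t^{2n}. Consequently, every element x ∈ K with x² = y² is conjugate in K either to y or to y·t, and y is not conjugate to y·t. -/
namespace KleinBottle

open SemidirectProduct Multiplicative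

lemma t_zpow (n : ℤ) : t ^ n = inl (ofAdd n) := by
  rw [t, ← map_zpow, ← ofAdd_zsmul]
  norm_num

lemma φ_one_s4 (a : Multiplicative ℤ) : φ (ofAdd 1) a = a⁻¹ := by
  simp [φ]

lemma y_inl (a : Multiplicative ℤ) : y * inl a = inl a⁻¹ * y := by
  have := inl_aut (φ := φ) (ofAdd 1) a
  rw [φ_one_s4] at this
  rw [y, this]
  simp [mul_assoc]

lemma key (n : ℤ) : t ^ (-n) * y * t ^ n = y * t ^ (2 * n) := by
  rw [t_zpow, t_zpow, t_zpow, mul_assoc, y_inl, y_inl, ← mul_assoc,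
    ← ofAdd_neg, ← ofAdd_neg, ← map_mul, ← ofAdd_add]
  congr 2
  ring

lemma inr_comm (b : Multiplicative ℤ) : inr (φ := φ) b * y = y * inr b := by
  rw [y, ← map_mul, ← map_mul, mul_comm]

lemma inl_inv (a : Multiplicative ℤ) : (inl (φ := φ) a)⁻¹ = inl a⁻¹ :=
  (map_inv (inl : Multiplicative ℤ →* K) a).symm

lemma inr_inv (b : Multiplicative ℤ) : (inr (φ := φ) b)⁻¹ = inr b⁻¹ :=
  (map_inv (inr : Multiplicative ℤ →* K) b).symm

lemma conj_y (c : K) : c * y * c⁻¹ = inl (c.left ^ 2) * y := by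
  set a := c.left
  set b := c.right
  have hc : c = inl a * inr b := (inl_left_mul_inr_right c).symm
  have h1 : inr (φ := φ) b * y * (inr b)⁻¹ = y := by
    rw [inr_comm]; simp [mul_assoc]
  calc c * y * c⁻¹
      = inl a * (inr (φ := φ) b * y * (inr b)⁻¹) * (inl a)⁻¹ := by
        rw [hc]; group
    _ = inl a * (y * inl a⁻¹) := by rw [h1, inl_inv]; group
    _ = inl (a ^ 2) * y := by rw [y_inl, inv_inv, ← mul_assoc, ← map_mul, sq]

theorem conj_classification :
    (∀ n : ℤ, t ^ (-n) * y * t ^ n = y * t ^ (2 * n)) ∧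
    (∀ x : K, x ^ 2 = y ^ 2 → IsConj y x ∨ IsConj (y * t) x) ∧
    ¬ IsConj y (y * t) := by
  refine ⟨key, ?_, ?_⟩
  · intro x hx
    have hr : x.right = ofAdd 1 := by
      have h := congrArg rightHom hx
      simp only [map_pow, y, rightHom_inr] at h
      have h2 := congrArg toAdd h
      simp only [toAdd_pow, toAdd_ofAdd, rightHom_eq_right] at h2
      have h2' : 2 * toAdd x.right = 2 * 1 := by simpa [smul_eq_mul] using h2
      have : toAdd x.right = 1 := by omega
      rw [← ofAdd_toAdd x.right, this]
    have hx' : x = y * t ^ (-(toAdd x.left)) := by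
      have h3 : y * inl (ofAdd (-(toAdd x.left))) = inl (ofAdd (toAdd x.left)) * y := by
        rw [y_inl, ← ofAdd_neg, neg_neg]
      rw [t_zpow, h3, ofAdd_toAdd, y, ← hr]
      exact (inl_left_mul_inr_right x).symm
    rcases Int.even_or_odd (-(toAdd x.left)) with ⟨n, hn⟩ | ⟨n, hn⟩
    · left
      rw [isConj_iff]
      refine ⟨t ^ (-n), ?_⟩
      rw [hx', hn, show n + n = 2 * n by ring, ← key n]
      group
    · right
      rw [isConj_iff]
      refine ⟨t ^ (-n), ?_⟩
      rw [hx', hn]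
      calc t ^ (-n) * (y * t) * (t ^ (-n))⁻¹
          = t ^ (-n) * y * t ^ n * t := by group
        _ = y * t ^ (2 * n) * t := by rw [key]
        _ = y * t ^ (2 * n + 1) := by rw [mul_assoc, ← zpow_add_one]
  · rw [isConj_iff]
    rintro ⟨c, hc⟩
    have h := conj_y c
    rw [hc] at h
    have h2 : y * t = inl (ofAdd (-1 : ℤ)) * y := by
      rw [t, y_inl, ← ofAdd_neg]
    rw [h2] at h
    have h3 : (ofAdd (-1 : ℤ)) = c.left ^ 2 := inl_injective (mul_right_cancel h)
    have h4 := congrArg toAdd h3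
    have h5 : (-1 : ℤ) = 2 * toAdd c.left := by simpa [smul_eq_mul, mul_comm] using h4
    omega


end KleinBottle
end

section
/- Let P be the presented group on generators A₁, A₃, B, U with relators expressing: (1) A₁A₃ = A₃A₁; (2) A₁BA₁ = BA₁B and A₃BA₃ = BA₃B; (3) UA₁U⁻¹ = A₁⁻¹; (4) UBU⁻¹ = A₃⁻¹B⁻¹A₃; (5) (A₃U)² = (UA₃)² and (A₃U)² = (A₁²A₃B)³. Let P' be the presented group on generators A₁, A₃, B, V with relators expressing: (1') A₁A₃ = A₃A₁; (2') A₁BA₁ = BA₁B and A₃BA₃ = BA₃B; (3') VA₁V⁻¹ = A₁⁻¹; (4') VBV⁻¹ = B⁻¹; (6') V² = (A₁²A₃B)³. Then there is a group isomorphism P ≃* P' sending A₁ ↦ A₁, A₃ ↦ A₃, B ↦ B, and U ↦ A₃⁻¹V (equivalently, with inverse sending V ↦ A₃U). -/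
namespace ModN31

/-- Generators `A₁, A₃, B, U` of the first presentation of `Mod(N_{3,1})`. -/
inductive GenU : Type
  | A1 | A3 | B | U

/-- Generators `A₁, A₃, B, V` of the second presentation of `Mod(N_{3,1})`. -/
inductive GenV : Type
  | A1 | A3 | B | V

open FreeGroup

/-- Relators of the first presentation (each relation `w₁ = w₂` is encoded as `w₁ * w₂⁻¹`):
(1) `A₁A₃ = A₃A₁`; (2) `A₁BA₁ = BA₁B`, `A₃BA₃ = BA₃B`; (3) `U A₁ U⁻¹ = A₁⁻¹`;
(4) `U B U⁻¹ = A₃⁻¹B⁻¹A₃`; (5) `(A₃U)² = (UA₃)²` and `(A₃U)² = (A₁²A₃B)³`. -/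
def relsU : Set (FreeGroup GenU) :=
  { of .A1 * of .A3 * (of .A3 * of .A1)⁻¹,
    of .A1 * of .B * of .A1 * (of .B * of .A1 * of .B)⁻¹,
    of .A3 * of .B * of .A3 * (of .B * of .A3 * of .B)⁻¹,
    of .U * of .A1 * (of .U)⁻¹ * of .A1,
    of .U * of .B * (of .U)⁻¹ * ((of .A3)⁻¹ * (of .B)⁻¹ * of .A3)⁻¹,
    (of .A3 * of .U) ^ 2 * ((of .U * of .A3) ^ 2)⁻¹,
    (of .A3 * of .U) ^ 2 * (((of .A1) ^ 2 * of .A3 * of .B) ^ 3)⁻¹ }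

/-- Relators of the second presentation:
(1') `A₁A₃ = A₃A₁`; (2') `A₁BA₁ = BA₁B`, `A₃BA₃ = BA₃B`; (3') `V A₁ V⁻¹ = A₁⁻¹`;
(4) `V B V⁻¹ = B⁻¹`; (6') `V² = (A₁²A₃B)³`. -/
def relsV : Set (FreeGroup GenV) :=
  { of .A1 * of .A3 * (of .A3 * of .A1)⁻¹,
    of .A1 * of .B * of .A1 * (of .B * of .A1 * of .B)⁻¹,
    of .A3 * of .B * of .A3 * (of .B * of .A3 * of .B)⁻¹,
    of .V * of .A1 * (of .V)⁻¹ * of .A1,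
    of .V * of .B * (of .V)⁻¹ * of .B,
    (of .V) ^ 2 * (((of .A1) ^ 2 * of .A3 * of .B) ^ 3)⁻¹ }

/-- In any group, if `a, c` commute, and `a, b` and `c, b` satisfy the braid relation, then
`(a²cb)³` commutes with `c`. -/
private lemma key_comm {G : Type*} [Group G] (a b c : G)
    (hac : a * c = c * a) (hab : a * b * a = b * a * b) (hcb : c * b * c = b * c * b) :
    c * (a * a * c * b) ^ 3 = (a * a * c * b) ^ 3 * c := by
  have eac : ∀ s : G, a*(c*s) = c*(a*s) := fun s => by rw [← mul_assoc, hac, mul_assoc]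
  have eca : ∀ s : G, c*(a*s) = a*(c*s) := fun s => (eac s).symm
  have eaba : ∀ s : G, a*(b*(a*s)) = b*(a*(b*s)) := fun s => by
    rw [← mul_assoc, ← mul_assoc, hab, mul_assoc, mul_assoc]
  have ebab : ∀ s : G, b*(a*(b*s)) = a*(b*(a*s)) := fun s => (eaba s).symm
  have ecbc : ∀ s : G, c*(b*(c*s)) = b*(c*(b*s)) := fun s => by
    rw [← mul_assoc, ← mul_assoc, hcb, mul_assoc, mul_assoc]
  have ebcb : ∀ s : G, b*(c*(b*s)) = c*(b*(c*s)) := fun s => (ecbc s).symm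
  calc c * (a * a * c * b) ^ 3 = c * (a * (a * (c * (b * (a * (a * (c * (b * (a * (a * (c * (b * 1)))))))))))) := by
        simp only [pow_succ, pow_zero, one_mul, mul_one, mul_assoc]
    _ = c * (a * (a * (c * (b * (a * (c * (a * (b * (a * (a * (c * (b * 1)))))))))))) := by rw [eac (b * (a * (a * (c * (b * 1)))))]
    _ = c * (a * (a * (c * (b * (c * (a * (a * (b * (a * (a * (c * (b * 1)))))))))))) := by rw [eac (a * (b * (a * (a * (c * (b * 1))))))]
    _ = a * (c * (a * (c * (b * (c * (a * (a * (b * (a * (a * (c * (b * 1)))))))))))) := by rw [eca (a * (c * (b * (c * (a * (a * (b * (a * (a * (c * (b * 1)))))))))))]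
    _ = a * (a * (c * (c * (b * (c * (a * (a * (b * (a * (a * (c * (b * 1)))))))))))) := by rw [eca (c * (b * (c * (a * (a * (b * (a * (a * (c * (b * 1))))))))))]
    _ = a * (a * (c * (c * (b * (c * (a * (b * (a * (b * (a * (c * (b * 1)))))))))))) := by rw [eaba (a * (c * (b * 1)))]
    _ = a * (a * (c * (c * (b * (c * (a * (b * (b * (a * (b * (c * (b * 1)))))))))))) := by rw [eaba (c * (b * 1))]
    _ = a * (a * (c * (b * (c * (b * (a * (b * (b * (a * (b * (c * (b * 1)))))))))))) := by rw [ecbc (a * (b * (b * (a * (b * (c * (b * 1)))))))]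
    _ = a * (a * (c * (b * (c * (a * (b * (a * (b * (a * (b * (c * (b * 1)))))))))))) := by rw [ebab (b * (a * (b * (c * (b * 1)))))]
    _ = a * (a * (c * (b * (a * (c * (b * (a * (b * (a * (b * (c * (b * 1)))))))))))) := by rw [eca (b * (a * (b * (a * (b * (c * (b * 1)))))))]
    _ = a * (a * (c * (b * (a * (c * (a * (b * (a * (a * (b * (c * (b * 1)))))))))))) := by rw [ebab (a * (b * (c * (b * 1))))]
    _ = a * (a * (c * (b * (a * (a * (c * (b * (a * (a * (b * (c * (b * 1)))))))))))) := by rw [eca (b * (a * (a * (b * (c * (b * 1))))))]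
    _ = a * (a * (c * (b * (a * (a * (c * (b * (a * (a * (c * (b * (c * 1)))))))))))) := by rw [ebcb (1)]
    _ = (a * a * c * b)^3 * c := by
        simp only [pow_succ, pow_zero, one_mul, mul_one, mul_assoc]



/-- The map on generators `A₁ ↦ A₁`, `A₃ ↦ A₃`, `B ↦ B`, `U ↦ A₃⁻¹V`. -/
def fUV : GenU → PresentedGroup relsV
  | .A1 => .of GenV.A1
  | .A3 => .of GenV.A3
  | .B => .of GenV.B
  | .U => (.of GenV.A3)⁻¹ * .of GenV.V

/-- The map on generators `A₁ ↦ A₁`, `A₃ ↦ A₃`, `B ↦ B`, `V ↦ A₃U`. -/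
def fVU : GenV → PresentedGroup relsU
  | .A1 => .of GenU.A1
  | .A3 => .of GenU.A3
  | .B => .of GenU.B
  | .V => .of GenU.A3 * .of GenU.U

private lemma mk_rel {α : Type*} (rels : Set (FreeGroup α)) {r : FreeGroup α} (hr : r ∈ rels) :
    PresentedGroup.mk rels r = 1 :=
  (QuotientGroup.eq_one_iff r).mpr (Subgroup.subset_normalClosure hr)

private lemma liftUV : ∀ r ∈ relsU, FreeGroup.lift fUV r = 1 := by
  set A : PresentedGroup relsV := .of GenV.A1 with hA
  set C : PresentedGroup relsV := .of GenV.A3 with hC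
  set B : PresentedGroup relsV := .of GenV.B with hB
  set V : PresentedGroup relsV := .of GenV.V with hV
  have hAC : A * C = C * A := by
    have h := mk_rel relsV (show _ ∈ relsV from Set.mem_insert _ _)
    simp only [_root_.map_mul, _root_.map_inv] at h
    exact mul_inv_eq_one.mp h
  have hAB : A * B * A = B * A * B := by
    have h := mk_rel relsV (show _ ∈ relsV from
      Set.mem_insert_iff.mpr (Or.inr (Set.mem_insert _ _)))
    simp only [_root_.map_mul, _root_.map_inv] at h
    exact mul_inv_eq_one.mp h
  have hCB : C * B * C = B * C * B := by
    have h := mk_rel relsV (show _ ∈ relsV from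
      Set.mem_insert_iff.mpr (Or.inr (Set.mem_insert_iff.mpr (Or.inr (Set.mem_insert _ _)))))
    simp only [_root_.map_mul, _root_.map_inv] at h
    exact mul_inv_eq_one.mp h
  have hVA : V * A = A⁻¹ * V := by
    have h := mk_rel relsV (show _ ∈ relsV from
      Set.mem_insert_iff.mpr (Or.inr (Set.mem_insert_iff.mpr (Or.inr
        (Set.mem_insert_iff.mpr (Or.inr (Set.mem_insert _ _)))))))
    simp only [_root_.map_mul, _root_.map_inv] at h
    have h' : V * A * V⁻¹ = A⁻¹ := mul_eq_one_iff_eq_inv.mp h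
    rw [← h']; group
  have hVB : V * B = B⁻¹ * V := by
    have h := mk_rel relsV (show _ ∈ relsV from
      Set.mem_insert_iff.mpr (Or.inr (Set.mem_insert_iff.mpr (Or.inr
        (Set.mem_insert_iff.mpr (Or.inr (Set.mem_insert_iff.mpr (Or.inr
          (Set.mem_insert _ _)))))))))
    simp only [_root_.map_mul, _root_.map_inv] at h
    have h' : V * B * V⁻¹ = B⁻¹ := mul_eq_one_iff_eq_inv.mp h
    rw [← h']; group
  have hV2 : V ^ 2 = (A ^ 2 * C * B) ^ 3 := by
    have h := mk_rel relsV (show _ ∈ relsV from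
      Set.mem_insert_iff.mpr (Or.inr (Set.mem_insert_iff.mpr (Or.inr
        (Set.mem_insert_iff.mpr (Or.inr (Set.mem_insert_iff.mpr (Or.inr
          (Set.mem_insert_iff.mpr (Or.inr rfl))))))))))
    simp only [_root_.map_mul, _root_.map_inv, _root_.map_pow] at h
    exact mul_inv_eq_one.mp h
  have comAC : Commute A C := hAC
  have hV2' : V ^ 2 = (A * A * C * B) ^ 3 := by rw [hV2, sq]
  have hCV2 : C * V ^ 2 = V ^ 2 * C := by
    rw [hV2']; exact key_comm A B C hAC hAB hCB
  have comCV2 : Commute C (V ^ 2) := hCV2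
  intro r hr
  simp only [relsU, Set.mem_insert_iff, Set.mem_singleton_iff] at hr
  rcases hr with rfl | rfl | rfl | rfl | rfl | rfl | rfl <;>
    simp only [_root_.map_mul, _root_.map_inv, _root_.map_pow, FreeGroup.lift_apply_of, fUV, ← hA, ← hC, ← hB, ← hV]
  · rw [hAC]; group
  · rw [hAB]; group
  · rw [hCB]; group
  · calc C⁻¹ * V * A * (C⁻¹ * V)⁻¹ * A
        = C⁻¹ * (V * A) * (V⁻¹ * (C * A)) := by group
      _ = C⁻¹ * (A⁻¹ * V) * (V⁻¹ * (C * A)) := by rw [hVA]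
      _ = C⁻¹ * ((A⁻¹ * C) * A) := by group
      _ = C⁻¹ * ((C * A⁻¹) * A) := by rw [comAC.inv_left.eq]
      _ = 1 := by group
  · calc C⁻¹ * V * B * (C⁻¹ * V)⁻¹ * (C⁻¹ * B⁻¹ * C)⁻¹
        = C⁻¹ * (V * B) * (V⁻¹ * (C * (C⁻¹ * (B * C)))) := by group
      _ = C⁻¹ * (B⁻¹ * V) * (V⁻¹ * (C * (C⁻¹ * (B * C)))) := by rw [hVB]
      _ = 1 := by group
  · have e1 : (C⁻¹ * V * C) ^ 2 = C⁻¹ * (V ^ 2 * C) := by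
      rw [sq, sq]; group
    calc (C * (C⁻¹ * V)) ^ 2 * ((C⁻¹ * V * C) ^ 2)⁻¹
        = V ^ 2 * ((C⁻¹ * V * C) ^ 2)⁻¹ := by rw [show C * (C⁻¹ * V) = V by group]
      _ = V ^ 2 * (C⁻¹ * (V ^ 2 * C))⁻¹ := by rw [e1]
      _ = V ^ 2 * C⁻¹ * (V ^ 2)⁻¹ * C := by group
      _ = C⁻¹ * V ^ 2 * (V ^ 2)⁻¹ * C := by rw [comCV2.symm.inv_right.eq]
      _ = 1 := by group
  · calc (C * (C⁻¹ * V)) ^ 2 * ((A ^ 2 * C * B) ^ 3)⁻¹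
        = V ^ 2 * ((A ^ 2 * C * B) ^ 3)⁻¹ := by group
      _ = 1 := by rw [hV2]; group

private lemma liftVU : ∀ r ∈ relsV, FreeGroup.lift fVU r = 1 := by
  set A : PresentedGroup relsU := .of GenU.A1 with hA
  set C : PresentedGroup relsU := .of GenU.A3 with hC
  set B : PresentedGroup relsU := .of GenU.B with hB
  set U : PresentedGroup relsU := .of GenU.U with hU
  have hAC : A * C = C * A := by
    have h := mk_rel relsU (show _ ∈ relsU from Set.mem_insert _ _)
    simp only [_root_.map_mul, _root_.map_inv] at h
    exact mul_inv_eq_one.mp h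
  have hAB : A * B * A = B * A * B := by
    have h := mk_rel relsU (show _ ∈ relsU from
      Set.mem_insert_iff.mpr (Or.inr (Set.mem_insert _ _)))
    simp only [_root_.map_mul, _root_.map_inv] at h
    exact mul_inv_eq_one.mp h
  have hCB : C * B * C = B * C * B := by
    have h := mk_rel relsU (show _ ∈ relsU from
      Set.mem_insert_iff.mpr (Or.inr (Set.mem_insert_iff.mpr (Or.inr (Set.mem_insert _ _)))))
    simp only [_root_.map_mul, _root_.map_inv] at h
    exact mul_inv_eq_one.mp h
  have hUA : U * A = A⁻¹ * U := by
    have h := mk_rel relsU (show _ ∈ relsU from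
      Set.mem_insert_iff.mpr (Or.inr (Set.mem_insert_iff.mpr (Or.inr
        (Set.mem_insert_iff.mpr (Or.inr (Set.mem_insert _ _)))))))
    simp only [_root_.map_mul, _root_.map_inv] at h
    have h' : U * A * U⁻¹ = A⁻¹ := mul_eq_one_iff_eq_inv.mp h
    rw [← h']; group
  have hUB : U * B = C⁻¹ * B⁻¹ * C * U := by
    have h := mk_rel relsU (show _ ∈ relsU from
      Set.mem_insert_iff.mpr (Or.inr (Set.mem_insert_iff.mpr (Or.inr
        (Set.mem_insert_iff.mpr (Or.inr (Set.mem_insert_iff.mpr (Or.inr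
          (Set.mem_insert _ _)))))))))
    simp only [_root_.map_mul, _root_.map_inv] at h
    have h' : U * B * U⁻¹ = C⁻¹ * B⁻¹ * C := mul_inv_eq_one.mp h
    rw [← h']; group
  have h7 : (C * U) ^ 2 * ((A ^ 2 * C * B) ^ 3)⁻¹ = 1 := by
    have h := mk_rel relsU (show _ ∈ relsU from
      Set.mem_insert_iff.mpr (Or.inr (Set.mem_insert_iff.mpr (Or.inr
        (Set.mem_insert_iff.mpr (Or.inr (Set.mem_insert_iff.mpr (Or.inr
          (Set.mem_insert_iff.mpr (Or.inr (Set.mem_insert_iff.mpr (Or.inr rfl))))))))))))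
    simp only [_root_.map_mul, _root_.map_inv, _root_.map_pow] at h
    exact h
  have comAC : Commute A C := hAC
  intro r hr
  simp only [relsV, Set.mem_insert_iff, Set.mem_singleton_iff] at hr
  rcases hr with rfl | rfl | rfl | rfl | rfl | rfl <;>
    simp only [_root_.map_mul, _root_.map_inv, _root_.map_pow, FreeGroup.lift_apply_of, fVU, ← hA, ← hC, ← hB, ← hU]
  · rw [hAC]; group
  · rw [hAB]; group
  · rw [hCB]; group
  · calc C * U * A * (C * U)⁻¹ * A
        = C * (U * A) * (U⁻¹ * (C⁻¹ * A)) := by group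
      _ = C * (A⁻¹ * U) * (U⁻¹ * (C⁻¹ * A)) := by rw [hUA]
      _ = C * ((A⁻¹ * C⁻¹) * A) := by group
      _ = C * ((C⁻¹ * A⁻¹) * A) := by rw [comAC.inv_left.inv_right.eq]
      _ = 1 := by group
  · calc C * U * B * (C * U)⁻¹ * B
        = C * (U * B) * (U⁻¹ * (C⁻¹ * B)) := by group
      _ = C * (C⁻¹ * B⁻¹ * C * U) * (U⁻¹ * (C⁻¹ * B)) := by rw [hUB]
      _ = 1 := by group
  · exact h7

/-- The two presentations give isomorphic groups, via `A₁ ↦ A₁`, `A₃ ↦ A₃`, `B ↦ B`,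
`U ↦ A₃⁻¹ V` (equivalently, with inverse sending `V ↦ A₃ U`). -/
theorem presentations_iso :
    ∃ e : PresentedGroup relsU ≃* PresentedGroup relsV,
      e (PresentedGroup.of GenU.A1) = PresentedGroup.of GenV.A1 ∧
      e (PresentedGroup.of GenU.A3) = PresentedGroup.of GenV.A3 ∧
      e (PresentedGroup.of GenU.B) = PresentedGroup.of GenV.B ∧
      e (PresentedGroup.of GenU.U) =
        (PresentedGroup.of GenV.A3)⁻¹ * PresentedGroup.of GenV.V ∧
      e.symm (PresentedGroup.of GenV.V) =
        PresentedGroup.of GenU.A3 * PresentedGroup.of GenU.U := by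
  have hUVof : ∀ x, PresentedGroup.toGroup liftUV (PresentedGroup.of x) = fUV x :=
    fun x => PresentedGroup.toGroup.of liftUV
  have hVUof : ∀ x, PresentedGroup.toGroup liftVU (PresentedGroup.of x) = fVU x :=
    fun x => PresentedGroup.toGroup.of liftVU
  have hcomp1 : (PresentedGroup.toGroup liftVU).comp (PresentedGroup.toGroup liftUV) =
      MonoidHom.id (PresentedGroup relsU) := by
    apply PresentedGroup.ext
    intro x
    cases x <;>
      simp only [MonoidHom.comp_apply, MonoidHom.id_apply, hUVof, fUV, _root_.map_mul, _root_.map_inv, hVUof,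
        fVU, inv_mul_cancel_left, mul_inv_cancel_left]
  have hcomp2 : (PresentedGroup.toGroup liftUV).comp (PresentedGroup.toGroup liftVU) =
      MonoidHom.id (PresentedGroup relsV) := by
    apply PresentedGroup.ext
    intro x
    cases x <;>
      simp only [MonoidHom.comp_apply, MonoidHom.id_apply, hVUof, fVU, _root_.map_mul, _root_.map_inv, hUVof,
        fUV, inv_mul_cancel_left, mul_inv_cancel_left]
  refine ⟨MonoidHom.toMulEquiv _ _ hcomp1 hcomp2, ?_, ?_, ?_, ?_, ?_⟩ <;>
    simp only [MonoidHom.toMulEquiv_apply, MonoidHom.toMulEquiv_symm_apply, hUVof, hVUof, fUV, fVU]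


end ModN31
end

section
/- Let G be the presented group on generators A₁, A₃, B, V with relators expressing: A₁A₃ = A₃A₁; A₁BA₁ = BA₁B; A₃BA₃ = BA₃B; VA₁V⁻¹ = A₁⁻¹; VBV⁻¹ = B⁻¹; and V² = (A₁²A₃B)³. Then V² lies in the center of G (in particular V²A₃ = A₃V², i.e., relation (5') of the paper's first presentation follows from the remaining relations). -/
namespace ModN31

open FreeGroup

/-- The presented group `G`, the mapping class group `Mod(N_{3,1})`. -/
abbrev G : Type := PresentedGroup relsV

def A1 : G := PresentedGroup.of GenV.A1
def A3 : G := PresentedGroup.of GenV.A3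
def B : G := PresentedGroup.of GenV.B
def V : G := PresentedGroup.of GenV.V

/-- The Dehn twist `W = V⁻¹ A₃ V`. -/
def W : G := V⁻¹ * A3 * V

/-- Relators map to `1` in the presented group. -/
lemma rel_one {r : FreeGroup GenV} (h : r ∈ relsV) : PresentedGroup.mk relsV r = 1 :=
  (QuotientGroup.eq_one_iff r).mpr (Subgroup.subset_normalClosure h)

lemma rel4 : V * A1 * V⁻¹ * A1 = 1 := by
  have h := rel_one (show FreeGroup.of GenV.V * FreeGroup.of GenV.A1 *
      (FreeGroup.of GenV.V)⁻¹ * FreeGroup.of GenV.A1 ∈ relsV by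
    simp [relsV])
  simpa [A1, V, PresentedGroup.of] using h

lemma rel5 : V * B * V⁻¹ * B = 1 := by
  have h := rel_one (show FreeGroup.of GenV.V * FreeGroup.of GenV.B *
      (FreeGroup.of GenV.V)⁻¹ * FreeGroup.of GenV.B ∈ relsV by
    simp [relsV])
  simpa [B, V, PresentedGroup.of] using h

lemma rel6 : V ^ 2 = (A1 ^ 2 * A3 * B) ^ 3 := by
  have h := rel_one (show (FreeGroup.of GenV.V) ^ 2 *
      (((FreeGroup.of GenV.A1) ^ 2 * FreeGroup.of GenV.A3 * FreeGroup.of GenV.B) ^ 3)⁻¹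
      ∈ relsV by simp [relsV])
  have h' : V ^ 2 * ((A1 ^ 2 * A3 * B) ^ 3)⁻¹ = 1 := by
    simpa [A1, A3, B, V, PresentedGroup.of] using h
  exact mul_inv_eq_one.mp h'

lemma commA1 : Commute (V ^ 2) A1 := by
  have h : V * A1 * V⁻¹ = A1⁻¹ := mul_eq_one_iff_eq_inv.mp rel4
  show V ^ 2 * A1 = A1 * V ^ 2
  calc V ^ 2 * A1 = V * (V * A1 * V⁻¹) * V := by rw [sq]; group
    _ = V * A1⁻¹ * V := by rw [h]
    _ = (V * A1 * V⁻¹)⁻¹ * V ^ 2 := by group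
    _ = A1 * V ^ 2 := by rw [h]; group

lemma commB : Commute (V ^ 2) B := by
  have h : V * B * V⁻¹ = B⁻¹ := mul_eq_one_iff_eq_inv.mp rel5
  show V ^ 2 * B = B * V ^ 2
  calc V ^ 2 * B = V * (V * B * V⁻¹) * V := by rw [sq]; group
    _ = V * B⁻¹ * V := by rw [h]
    _ = (V * B * V⁻¹)⁻¹ * V ^ 2 := by group
    _ = B * V ^ 2 := by rw [h]; group

lemma commA3 : Commute (V ^ 2) A3 := by
  have hw : Commute (V ^ 2) (A1 ^ 2 * A3 * B) := by
    rw [rel6]; exact (Commute.refl _).pow_left 3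
  have hA1sq : Commute (V ^ 2) (A1 ^ 2) := commA1.pow_right 2
  have hcb : Commute (V ^ 2) (A3 * B) := by
    have h := hA1sq.inv_right.mul_right hw
    rwa [show (A1 ^ 2)⁻¹ * (A1 ^ 2 * A3 * B) = A3 * B by group] at h
  have h := hcb.mul_right commB.inv_right
  rwa [show A3 * B * B⁻¹ = A3 by group] at h

lemma commV : Commute (V ^ 2) V := (Commute.refl V).pow_left 2

/-- `V²` is central in `G`; in particular `V² A₃ = A₃ V²` (relation (5') follows from the
remaining relations). -/
theorem V_sq_central :
    V ^ 2 ∈ Subgroup.center G ∧ V ^ 2 * A3 = A3 * V ^ 2 := by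
  constructor
  · rw [Subgroup.mem_center_iff]
    intro g
    have hg : g ∈ Subgroup.centralizer {V ^ 2} := by
      refine PresentedGroup.generated_by relsV _ ?_ g
      intro j
      rw [Subgroup.mem_centralizer_iff]
      rintro h rfl
      · cases j
        · exact commA1.eq
        · exact commA3.eq
        · exact commB.eq
        · exact commV.eq
    have := Subgroup.mem_centralizer_iff.mp hg (V ^ 2) rfl
    exact this.symm
  · exact commA3.eq

end ModN31
end
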